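/- Let R be a commutative ring, let n ≥ 1 and r ≥ 1 be integers, let M be a free R-module of rank n + r, and let N ⊆ M be a direct summand which is free of rank n and such that M/N is free of rank r. Then for every integer d with 1 ≤ d ≤ n, the canonical R-linear map ⋀^d N ⊗_R ⋀^r M → ⋀^{d+r} M, induced by the inclusion N ⊆ M and the wedge product, is surjective. -/

import Mathlib

/-!
Split `M = N ⊕ N'` with `N' ≅ M/N` free of rank `r`, and let `A`, `B` be the images of `N`, `N'`
in degree one of the exterior algebra, so that `⋀^k M = (A + B)^k` in the semiring of submodules.
Since `ι` anticommutes, `A` and `B` commute, and `B^(r+1) = 0` because `⋀^(r+1)` of a free module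
of rank `r` vanishes. In the binomial expansion of `(A + B)^(d+r)` only the terms `A^(d+r-j) B^j`
with `j ≤ r` survive, and each lies in `A^d (A + B)^r`, which is the image of the map.
-/

open TensorProduct

/-- The canonical map `⋀^d N ⊗ ⋀^r M → ExteriorAlgebra R M` induced by the inclusion
`N ⊆ M` and the wedge product; its image lands in `⋀^{d+r} M`, and it sends
`(x₁∧…∧x_d) ⊗ (y₁∧…∧y_r)` to `x₁∧…∧x_d∧y₁∧…∧y_r`. -/
noncomputable def wedgeMulMap {R : Type*} [CommRing R]
    {M : Type*} [AddCommGroup M] [Module R M] (N : Submodule R M) (d r : ℕ) :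
    (⋀[R]^d ↥N) ⊗[R] (⋀[R]^r M) →ₗ[R] ExteriorAlgebra R M :=
  (LinearMap.mul' R (ExteriorAlgebra R M)) ∘ₗ
    TensorProduct.map
      ((ExteriorAlgebra.map N.subtype).toLinearMap ∘ₗ (⋀[R]^d (↥N)).subtype)
      ((⋀[R]^r M).subtype)

theorem add_pow_le_pow_mul_add_pow {α : Type*} [IdemSemiring α] {a b : α} (hab : Commute a b)
    {r : ℕ} (hb : b ^ (r + 1) = 0) (d : ℕ) : (a + b) ^ (d + r) ≤ a ^ d * (a + b) ^ r := by
  rw [hab.add_pow]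
  refine Finset.sum_induction _ (· ≤ a ^ d * (a + b) ^ r) (fun _ _ => add_le) zero_le ?_
  intro k hk
  rw [Finset.mem_range] at hk
  rw [natCast_eq_one (Nat.choose_pos (by omega)).ne', mul_one]
  by_cases hkd : d ≤ k
  · obtain ⟨i, rfl⟩ := Nat.exists_eq_add_of_le hkd
    calc a ^ (d + i) * b ^ (d + r - (d + i)) = a ^ d * (a ^ i * b ^ (r - i)) := by
          rw [pow_add, mul_assoc, Nat.add_sub_add_left]
      _ ≤ a ^ d * ((a + b) ^ i * (a + b) ^ (r - i)) := by
          gcongr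
          exacts [le_self_add, le_add_self]
      _ = a ^ d * (a + b) ^ r := by rw [← pow_add, Nat.add_sub_cancel' (by omega)]
  · obtain ⟨j, hj⟩ := Nat.exists_eq_add_of_le (show r + 1 ≤ d + r - k by omega)
    rw [hj, pow_add, hb, zero_mul, mul_zero]
    exact zero_le

theorem LinearMap.range_mul'_comp_map {R S M N : Type*} [CommSemiring R] [Semiring S]
    [Algebra R S] [AddCommMonoid M] [Module R M] [AddCommMonoid N] [Module R N]
    (f : M →ₗ[R] S) (g : N →ₗ[R] S) :
    LinearMap.range (LinearMap.mul' R S ∘ₗ TensorProduct.map f g) =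
      LinearMap.range f * LinearMap.range g := by
  rw [LinearMap.range_comp, TensorProduct.range_map, Submodule.map_map₂, Submodule.mul_eq_map₂]
  rfl

namespace ExteriorAlgebra

variable {R : Type*} [CommRing R] {M : Type*} [AddCommGroup M] [Module R M]

theorem commute_map_ι (P Q : Submodule R M) : Commute (P.map (ι R)) (Q.map (ι R)) := by
  have key : ∀ P Q : Submodule R M, P.map (ι R) * Q.map (ι R) ≤ Q.map (ι R) * P.map (ι R) := by
    intro P Q
    rw [Submodule.mul_le]
    rintro _ ⟨p, hp, rfl⟩ _ ⟨q, hq, rfl⟩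
    rw [eq_neg_of_add_eq_zero_left (ι_add_mul_swap p q)]
    exact neg_mem (Submodule.mul_mem_mul ⟨q, hq, rfl⟩ ⟨p, hp, rfl⟩)
  exact le_antisymm (key P Q) (key Q P)

theorem map_exteriorPower {Q : Type*} [AddCommGroup Q] [Module R Q] (f : Q →ₗ[R] M) (n : ℕ) :
    (⋀[R]^n Q).map (map f).toLinearMap = (LinearMap.range f).map (ι R) ^ n := by
  rw [Submodule.map_pow, LinearMap.range_eq_map, LinearMap.range_eq_map, ← Submodule.map_comp,
    map_comp_ι, Submodule.map_comp]

theorem exteriorPower_eq_bot_of_finrank_lt [Module.Free R M] [Module.Finite R M] {n : ℕ}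
    (hn : Module.finrank R M < n) : ⋀[R]^n M = ⊥ := by
  rcases subsingleton_or_nontrivial R with hR | hR
  · have := Module.subsingleton R (ExteriorAlgebra R M)
    exact Subsingleton.elim _ _
  let b := (Module.Free.chooseBasis R M).reindex (Fintype.equivFin _)
  have : IsEmpty (Set.powersetCard (Fin (Fintype.card (Module.Free.ChooseBasisIndex R M))) n) := by
    rw [Set.isEmpty_coe_sort, Set.powersetCard.eq_empty_iff, Nat.card_eq_fintype_card,
      Fintype.card_fin, ← Module.finrank_eq_card_chooseBasisIndex]
    exact hn
  have : Subsingleton (⋀[R]^n M) :=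
    not_nontrivial_iff_subsingleton.mp fun _ => isEmptyElim (b.exteriorPower n).index_nonempty.some
  exact Submodule.eq_bot_of_subsingleton

end ExteriorAlgebra

open ExteriorAlgebra in
theorem wedgeMulMap_surjective_general
    {R : Type*} [CommRing R] (r : ℕ)
    {M : Type*} [AddCommGroup M] [Module R M] [Module.Finite R M]
    (N : Submodule R M) (hcompl : ∃ N' : Submodule R M, IsCompl N N')
    [Module.Free R (M ⧸ N)] (hrankQ : Module.finrank R (M ⧸ N) = r)
    (d : ℕ) :
    LinearMap.range (wedgeMulMap N d r) = ⋀[R]^(d + r) M := by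
  obtain ⟨N', hNN'⟩ := hcompl
  obtain ⟨f, hf⟩ : ∃ f : (M ⧸ N) →ₗ[R] M, LinearMap.range f = N' :=
    ⟨N'.subtype ∘ₗ (N.quotientEquivOfIsCompl N' hNN').toLinearMap, by
      rw [LinearMap.range_comp_of_range_eq_top _ (LinearEquiv.range _), Submodule.range_subtype]⟩
  set A := N.map (ι R)
  set B := N'.map (ι R)
  have hι : LinearMap.range (ι R) = A + B := by
    rw [Submodule.add_eq_sup, ← Submodule.map_sup, hNN'.sup_eq_top, LinearMap.range_eq_map]
  have hB : B ^ (r + 1) = 0 := calc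
    B ^ (r + 1) = (⋀[R]^(r + 1) (M ⧸ N)).map (map f).toLinearMap := by rw [map_exteriorPower, hf]
    _ = 0 := by
      rw [exteriorPower_eq_bot_of_finrank_lt (by omega), Submodule.map_bot, Submodule.zero_eq_bot]
  have hrange : LinearMap.range (wedgeMulMap N d r) = A ^ d * ⋀[R]^r M := by
    rw [wedgeMulMap, LinearMap.range_mul'_comp_map, LinearMap.range_comp, Submodule.range_subtype,
      Submodule.range_subtype, map_exteriorPower, Submodule.range_subtype]
  rw [hrange, exteriorPower, exteriorPower, hι]
  refine le_antisymm ?_ (add_pow_le_pow_mul_add_pow (commute_map_ι N N') hB d)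
  rw [pow_add]
  gcongr
  exact le_self_add

/-- Let `R` be a commutative ring, `n, r ≥ 1`, `M` a free `R`-module of
rank `n + r`, and `N ⊆ M` a direct summand which is free of rank `n` with `M/N` free of
rank `r`.  Then for `1 ≤ d ≤ n`, the canonical map `⋀^d N ⊗ ⋀^r M → ⋀^{d+r} M` is
surjective (i.e. its range is all of `⋀^{d+r} M`). -/
theorem wedgeMulMap_surjective
    {R : Type*} [CommRing R] (n r : ℕ) (hn : 1 ≤ n) (hr : 1 ≤ r)
    {M : Type*} [AddCommGroup M] [Module R M] [Module.Free R M] [Module.Finite R M]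
    (hrankM : Module.finrank R M = n + r)
    (N : Submodule R M) (hcompl : ∃ N' : Submodule R M, IsCompl N N')
    [Module.Free R ↥N] (hrankN : Module.finrank R ↥N = n)
    [Module.Free R (M ⧸ N)] (hrankQ : Module.finrank R (M ⧸ N) = r)
    (d : ℕ) (hd1 : 1 ≤ d) (hdn : d ≤ n) :
    LinearMap.range (wedgeMulMap N d r) = ⋀[R]^(d + r) M :=
  wedgeMulMap_surjective_general r N hcompl hrankQ d
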